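/- arXiv:math/0202092 — 2 statements merged into one kernel-verified Lean document; each statement's English description precedes it below -/
import Mathlib

section
/- Let Ɓ = {(2,1), (17,7)}. Then the inverse of 7 modulo 17 is b = 5, the degree d = 2·(-1) - 2 + 1·1/2 + 5·12/17 equals 1/34, and the K3 Hilbert series satisfies P_{1/34,Ɓ}(t) = (1-t^20)(1-t^21) / ((1-t^3)(1-t^4)(1-t^7)(1-t^10)(1-t^17)) in ℚ(t); equivalently (1-t^3)(1-t^4)(1-t^7)(1-t^10)(1-t^17)·P_{1/34,Ɓ}(t) = 1 - t^20 - t^21 + t^41. -/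
/-- The K3 Hilbert series `P_{d,Ɓ}` as an element of `ℚ(t)`, where the basket is
recorded as a list of pairs `(r, b)` (with `b` the inverse mod `r` of the
singularity type `a`), and `\overline{m}` is the least nonnegative residue mod `r`. -/
noncomputable def K3HilbertSeries (d : ℚ) (B : List (ℕ × ℕ)) : RatFunc ℚ :=
  (1 + RatFunc.X) / (1 - RatFunc.X)
    + RatFunc.X * (1 + RatFunc.X) / (1 - RatFunc.X) ^ 3 * RatFunc.C (d / 2)
    - (B.map (fun p =>
        (1 / (1 - RatFunc.X ^ p.1)) *
          ∑ i ∈ Finset.Icc 1 (p.1 - 1),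
            RatFunc.C ((((p.2 * i) % p.1 : ℕ) : ℚ)
                * ((p.1 : ℚ) - (((p.2 * i) % p.1 : ℕ) : ℚ)) / (2 * (p.1 : ℚ)))
              * RatFunc.X ^ i)).sum

instance : CharZero (RatFunc ℚ) :=
  charZero_of_injective_algebraMap (RatFunc.algebraMap_injective ℚ)

lemma one_sub_X_pow_ne (n : ℕ) (hn : n ≠ 0) : (1 - RatFunc.X ^ n : RatFunc ℚ) ≠ 0 := by
  have hp : (1 - Polynomial.X ^ n : Polynomial ℚ) ≠ 0 := by
    intro h
    have h2 : (Polynomial.X ^ n : Polynomial ℚ) = 1 := by linear_combination -h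
    have := congrArg Polynomial.natDegree h2
    simp only [Polynomial.natDegree_X_pow, Polynomial.natDegree_one] at this
    exact hn this
  have := RatFunc.algebraMap_ne_zero hp
  simpa [map_sub, map_pow, RatFunc.algebraMap_X] using this

set_option maxHeartbeats 2000000 in
lemma k3_key :
    (1 - RatFunc.X ^ 3) * (1 - RatFunc.X ^ 4) * (1 - RatFunc.X ^ 7)
        * (1 - RatFunc.X ^ 10) * (1 - RatFunc.X ^ 17)
        * K3HilbertSeries (1 / 34) [(2, 1), (17, 5)]
      = 1 - RatFunc.X ^ 20 - RatFunc.X ^ 21 + RatFunc.X ^ 41 := by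
  have h1 := one_sub_X_pow_ne 1 one_ne_zero
  have h2 := one_sub_X_pow_ne 2 two_ne_zero
  have h17 := one_sub_X_pow_ne 17 (by norm_num)
  rw [K3HilbertSeries]
  norm_num [Finset.sum_Icc_succ_top, Finset.Icc_self, map_div₀, map_ofNat, map_one]
  have hX1 : (1 - RatFunc.X : RatFunc ℚ) ≠ 0 := by simpa using h1
  set X : RatFunc ℚ := RatFunc.X with hX
  have f1 : (1 - X) * ((1 + X) / (1 - X)) = 1 + X := by
    rw [mul_comm]; exact div_mul_cancel₀ _ hX1
  have f3 : (1 - X) ^ 3 * (X * (1 + X) / (1 - X) ^ 3) = X * (1 + X) := by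
    rw [mul_comm]; exact div_mul_cancel₀ _ (pow_ne_zero 3 hX1)
  have f2 : (1 - X ^ 2) * (1 - X ^ 2)⁻¹ = 1 := mul_inv_cancel₀ h2
  have f17 : (1 - X ^ 17) * (1 - X ^ 17)⁻¹ = 1 := mul_inv_cancel₀ h17
  linear_combination
    ((1 + X + X ^ 2) * (1 - X ^ 4) * (1 - X ^ 7) * (1 - X ^ 10) * (1 - X ^ 17)) * f1
    + ((68 : RatFunc ℚ)⁻¹ * ((1 + X + X ^ 2) * (1 + X + X ^ 2 + X ^ 3)
        * (1 + X + X ^ 2 + X ^ 3 + X ^ 4 + X ^ 5 + X ^ 6) * (1 - X ^ 10) * (1 - X ^ 17))) * f3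
    - ((1 - X ^ 3) * (1 + X ^ 2) * (1 - X ^ 7) * (1 - X ^ 10) * (1 - X ^ 17) * (4⁻¹ * X)) * f2
    - ((1 - X ^ 3) * (1 - X ^ 4) * (1 - X ^ 7) * (1 - X ^ 10)
        * (60 / 34 * X + 70 / 34 * X ^ 2 + 30 / 34 * X ^ 3 + 42 / 34 * X ^ 4
          + 72 / 34 * X ^ 5 + 52 / 34 * X ^ 6 + 16 / 34 * X ^ 7 + 66 / 34 * X ^ 8
          + 66 / 34 * X ^ 9 + 16 / 34 * X ^ 10 + 52 / 34 * X ^ 11 + 72 / 34 * X ^ 12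
          + 42 / 34 * X ^ 13 + 30 / 34 * X ^ 14 + 70 / 34 * X ^ 15 + 60 / 34 * X ^ 16)) * f17

/-- For the basket `{(2,1), (17,7)}`: the inverse of `7` mod `17`
is `b = 5`, the degree is `d = 2·(-1) - 2 + 1·1/2 + 5·12/17 = 1/34`, and
`P(t) = (1-t^20)(1-t^21)/((1-t^3)(1-t^4)(1-t^7)(1-t^10)(1-t^17))`; equivalently
`(1-t^3)(1-t^4)(1-t^7)(1-t^10)(1-t^17)·P(t) = 1 - t^20 - t^21 + t^41`. -/
theorem k3_Fletcher2_82_hilbert_series :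
    (7 * 5) % 17 = 1 ∧ (1 * 1) % 2 = 1 ∧
    (2 * (-1 : ℚ) - 2 + 1 * 1 / 2 + 5 * 12 / 17 = 1 / 34) ∧
    K3HilbertSeries (1 / 34) [(2, 1), (17, 5)]
      = (1 - RatFunc.X ^ 20) * (1 - RatFunc.X ^ 21) /
          ((1 - RatFunc.X ^ 3) * (1 - RatFunc.X ^ 4) * (1 - RatFunc.X ^ 7)
            * (1 - RatFunc.X ^ 10) * (1 - RatFunc.X ^ 17)) ∧
    (1 - RatFunc.X ^ 3) * (1 - RatFunc.X ^ 4) * (1 - RatFunc.X ^ 7)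
        * (1 - RatFunc.X ^ 10) * (1 - RatFunc.X ^ 17)
        * K3HilbertSeries (1 / 34) [(2, 1), (17, 5)]
      = 1 - RatFunc.X ^ 20 - RatFunc.X ^ 21 + RatFunc.X ^ 41 := by
  have hD : (1 - RatFunc.X ^ 3) * (1 - RatFunc.X ^ 4) * (1 - RatFunc.X ^ 7)
      * (1 - RatFunc.X ^ 10) * (1 - RatFunc.X ^ 17) ≠ (0 : RatFunc ℚ) :=
    mul_ne_zero (mul_ne_zero (mul_ne_zero (mul_ne_zero
      (one_sub_X_pow_ne 3 (by norm_num)) (one_sub_X_pow_ne 4 (by norm_num)))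
      (one_sub_X_pow_ne 7 (by norm_num))) (one_sub_X_pow_ne 10 (by norm_num)))
      (one_sub_X_pow_ne 17 (by norm_num))
  refine ⟨by norm_num, by norm_num, by norm_num, ?_, k3_key⟩
  rw [eq_div_iff hD]
  linear_combination k3_key
end

section
/- Let Ɓ = {(2,1), (3,1), (3,1), (3,1), (4,1), (5,1)}. Then the degree d = 2·(-1) - 2 + 1·1/2 + 3·(1·2/3) + 1·3/4 + 1·4/5 equals 1/20, and the K3 Hilbert series satisfies P_{1/20,Ɓ}(t) = (1-t^18) / ((1-t^3)(1-t^4)(1-t^5)(1-t^6)) in ℚ(t). -/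
/-! With `b = 1` every residue `bi mod r` is `i` itself, so each basket term is an explicit
rational function with denominator `1 - t^r`. After clearing the common denominator
`(1 - t)^3 (1 - t^2) ⋯ (1 - t^6)` the claim becomes a polynomial identity. -/

open RatFunc

theorem RatFunc.one_sub_X_pow_ne_zero {K : Type*} [Field K] {n : ℕ} (hn : n ≠ 0) :
    (1 - X ^ n : RatFunc K) ≠ 0 := by
  have h : (1 - Polynomial.X ^ n : Polynomial K) ≠ 0 := by
    rw [← neg_ne_zero, neg_sub, ← map_one Polynomial.C]
    exact Polynomial.X_pow_sub_C_ne_zero (Nat.pos_of_ne_zero hn) 1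
  simpa using RatFunc.algebraMap_ne_zero h

namespace K3HilbertSeries

noncomputable def basketTerm (p : ℕ × ℕ) : RatFunc ℚ :=
  1 / (1 - X ^ p.1) * ∑ i ∈ Finset.Icc 1 (p.1 - 1),
    C (((p.2 * i % p.1 : ℕ) : ℚ) * (p.1 - (p.2 * i % p.1 : ℕ)) / (2 * p.1)) * X ^ i

theorem eq_sub_sum_basketTerm (d : ℚ) (B : List (ℕ × ℕ)) :
    K3HilbertSeries d B = (1 + X) / (1 - X) + X * (1 + X) / (1 - X) ^ 3 * C (d / 2)
      - (B.map basketTerm).sum := rfl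

theorem basketTerm_one (r : ℕ) :
    basketTerm (r, 1) =
      (∑ i ∈ Finset.Icc 1 (r - 1), C ((i : ℚ) * (r - i) / (2 * r)) * X ^ i) / (1 - X ^ r) := by
  rw [basketTerm, one_div_mul_eq_div]
  congr 1
  refine Finset.sum_congr rfl fun i hi => ?_
  rw [one_mul, Nat.mod_eq_of_lt (by grind)]

theorem basketTerm_two_one : basketTerm (2, 1) = (1 / 4 * X) / (1 - X ^ 2) := by
  rw [basketTerm_one]
  simp only [Nat.reduceSub, Finset.Icc_ofNat_ofNat]
  norm_num [add_assoc]

theorem basketTerm_three_one :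
    basketTerm (3, 1) = (1 / 3 * X + 1 / 3 * X ^ 2) / (1 - X ^ 3) := by
  rw [basketTerm_one]
  simp only [Nat.reduceSub, Finset.Icc_ofNat_ofNat]
  norm_num [add_assoc]

theorem basketTerm_four_one :
    basketTerm (4, 1) = (3 / 8 * X + 1 / 2 * X ^ 2 + 3 / 8 * X ^ 3) / (1 - X ^ 4) := by
  rw [basketTerm_one]
  simp only [Nat.reduceSub, Finset.Icc_ofNat_ofNat]
  norm_num [add_assoc]

theorem basketTerm_five_one :
    basketTerm (5, 1) =
      (2 / 5 * X + 3 / 5 * X ^ 2 + 3 / 5 * X ^ 3 + 2 / 5 * X ^ 4) / (1 - X ^ 5) := by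
  rw [basketTerm_one]
  simp only [Nat.reduceSub, Finset.Icc_ofNat_ofNat]
  norm_num [add_assoc]

end K3HilbertSeries

/-- For the basket `{(2,1), (3,1), (3,1), (3,1), (4,1), (5,1)}`
(each `a = 1`, so each inverse `b = 1`), the degree is
`d = 2·(-1) - 2 + 1·1/2 + 3·(1·2/3) + 1·3/4 + 1·4/5 = 1/20`, and
`P(t) = (1-t^18)/((1-t^3)(1-t^4)(1-t^5)(1-t^6))` in `ℚ(t)` (Reid1(39)). -/
theorem k3_Reid1_39_hilbert_series :
    (2 * (-1 : ℚ) - 2 + 1 * 1 / 2 + 3 * (1 * 2 / 3) + 1 * 3 / 4 + 1 * 4 / 5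
        = 1 / 20) ∧
    K3HilbertSeries (1 / 20) [(2, 1), (3, 1), (3, 1), (3, 1), (4, 1), (5, 1)]
      = (1 - RatFunc.X ^ 18) /
          ((1 - RatFunc.X ^ 3) * (1 - RatFunc.X ^ 4) * (1 - RatFunc.X ^ 5)
            * (1 - RatFunc.X ^ 6)) := by
  refine ⟨by norm_num, ?_⟩
  have h {n : ℕ} (hn : n ≠ 0) : (1 - X ^ n : RatFunc ℚ) ≠ 0 := one_sub_X_pow_ne_zero hn
  have h1 : (1 - X : RatFunc ℚ) ≠ 0 := by simpa using h one_ne_zero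
  simp only [K3HilbertSeries.eq_sub_sum_basketTerm, List.map_cons, List.map_nil, List.sum_cons,
    List.sum_nil, K3HilbertSeries.basketTerm_two_one, K3HilbertSeries.basketTerm_three_one,
    K3HilbertSeries.basketTerm_four_one, K3HilbertSeries.basketTerm_five_one, map_div₀, map_one,
    map_ofNat]
  field_simp [h (n := 2) (by norm_num), h (n := 3) (by norm_num), h (n := 4) (by norm_num),
    h (n := 5) (by norm_num), h (n := 6) (by norm_num)]
  ring
end
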